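/- For 1 ≤ j ≤ n let w_j := Σ_{l=j}^{n} q^{l−j} v_{ε_{−l}+ε_l} ∈ V (the vector representing Ω_j). Then for all i, j ∈ I⁺: e_i w_j = 0 and f_i w_j = 0 whenever i ≠ j; e_j w_j = −v_{ε_{−j}+ε_{j−1}} and f_j w_j = v_{ε_{1−j}+ε_j} for j > 1; and e_1 w_1 = v_{2ε_{−1}}, f_1 w_1 = v_{2ε_1}. -/

import Mathlib

noncomputable section

/-- The `q`-integer `[m]_q = (q^m - q^{-m})/(q - q⁻¹)`. -/
def qnum {𝕜 : Type*} [Field 𝕜] (q : 𝕜) (m : ℤ) : 𝕜 :=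
  (q ^ m - q ^ (-m)) / (q - q⁻¹)

/-- The Gaussian binomial `[m choose 2]_q = [m]_q [m-1]_q / [2]_q`, `[2]_q = q + q⁻¹`. -/
def qbinom2 {𝕜 : Type*} [Field 𝕜] (q : 𝕜) (m : ℤ) : 𝕜 :=
  qnum q m * qnum q (m - 1) / (q + q⁻¹)

/-- The vector space with basis `{v_a}` indexed by exponent vectors. -/
abbrev QV (𝕜 : Type*) [Field 𝕜] := (ℤ → ℕ) →₀ 𝕜

/-- The basis vector `v_a`. -/
def vB {𝕜 : Type*} [Field 𝕜] (a : ℤ → ℕ) : QV 𝕜 := Finsupp.single a 1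

/-- The linear operator on `QV 𝕜` determined by its values on the basis vectors. -/
def mkOp {𝕜 : Type*} [Field 𝕜] (f : (ℤ → ℕ) → QV 𝕜) : Module.End 𝕜 (QV 𝕜) :=
  Finsupp.lift (QV 𝕜) 𝕜 (ℤ → ℕ) f

/-- `s_m(a) = Σ_{l ∈ I, -m < l < m} a_l`. -/
def sE (m : ℤ) (a : ℤ → ℕ) : ℕ :=
  ∑ l ∈ (Finset.Ioo (-m) m).erase 0, a l

/-- The operator `ω_j` (with `ω_j = 0` for `j > n`). -/
def ωop {𝕜 : Type*} [Field 𝕜] (n : ℕ) (q : 𝕜) (j : ℤ) : Module.End 𝕜 (QV 𝕜) :=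
  mkOp fun a => (∏ l ∈ Finset.Icc (-(n : ℤ)) (-j), q ^ (2 * a l)) •
    ∑ m ∈ Finset.Icc j (n : ℤ),
      q ^ (m - j + (sE m a : ℤ)) • vB (a + Pi.single (-m) 1 + Pi.single m 1)

/-- The operator `e_i`. -/
def eop {𝕜 : Type*} [Field 𝕜] (n : ℕ) (q : 𝕜) (i : ℤ) : Module.End 𝕜 (QV 𝕜) :=
  if i = 1 then
    mkOp fun a =>
      qnum (q ^ 2) (a 1) • vB (a + Pi.single (-1 : ℤ) 1 - Pi.single 1 1)
      + ((q - q⁻¹) * qbinom2 q (a 1)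
          * q ^ (2 - 2 * ∑ l ∈ Finset.Icc (-(n : ℤ)) (-2), (a l : ℤ))) •
          ωop n q 2 (vB (a - Pi.single 1 2))
  else
    mkOp fun a =>
      (q ^ ((a (i - 1) : ℤ) - (a i : ℤ)) * qnum q (a (1 - i))) •
          vB (a + Pi.single (-i) 1 - Pi.single (1 - i) 1)
      - qnum q (a i) • vB (a + Pi.single (i - 1) 1 - Pi.single i 1)

/-- The operator `f_i`. -/
def fop {𝕜 : Type*} [Field 𝕜] (n : ℕ) (q : 𝕜) (i : ℤ) : Module.End 𝕜 (QV 𝕜) :=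
  if i = 1 then
    mkOp fun a =>
      qnum (q ^ 2) (a (-1)) • vB (a - Pi.single (-1 : ℤ) 1 + Pi.single 1 1)
      + ((q - q⁻¹) * qbinom2 q (a (-1))
          * q ^ (2 - 2 * ∑ l ∈ Finset.Icc (-(n : ℤ)) (-2), (a l : ℤ))) •
          ωop n q 2 (vB (a - Pi.single (-1 : ℤ) 2))
  else
    mkOp fun a =>
      qnum q (a (-i)) • vB (a - Pi.single (-i) 1 + Pi.single (1 - i) 1)
      - (q ^ ((a (1 - i) : ℤ) - (a (-i) : ℤ)) * qnum q (a (i - 1))) •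
          vB (a - Pi.single (i - 1) 1 + Pi.single i 1)

/-- The operator `k_i^{e}` for `e = ±1`. -/
def kop {𝕜 : Type*} [Field 𝕜] (q : 𝕜) (i : ℤ) (e : ℤ) : Module.End 𝕜 (QV 𝕜) :=
  if i = 1 then
    mkOp fun a => q ^ (e * 2 * ((a (-1 : ℤ) : ℤ) - (a 1 : ℤ))) • vB a
  else
    mkOp fun a =>
      q ^ (e * ((a (-i) : ℤ) - (a (1 - i) : ℤ) + (a (i - 1) : ℤ) - (a i : ℤ))) • vB a

/-- `q_i`: `q₁ = q²`, `q_i = q` for `i ≥ 2`. -/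
def qSub {𝕜 : Type*} [Field 𝕜] (q : 𝕜) (i : ℤ) : 𝕜 := if i = 1 then q ^ 2 else q

/-- The Cartan matrix of type `Cₙ` (with `α₁` the long simple root). -/
def cartan (i j : ℤ) : ℤ :=
  if i = j then 2
  else if i = 1 ∧ j = 2 then -1
  else if i = 2 ∧ j = 1 then -2
  else if i - j = 1 ∨ j - i = 1 then -1
  else 0

/-- `w_j = Σ_{l=j}^{n} q^{l-j} v_{ε_{-l}+ε_l}`, the vector representing `Ω_j`. -/
def wvec {𝕜 : Type*} [Field 𝕜] (n : ℕ) (q : 𝕜) (j : ℤ) : QV 𝕜 :=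
  ∑ l ∈ Finset.Icc j (n : ℤ), q ^ (l - j) • vB (Pi.single (-l) 1 + Pi.single l 1)

/-!
Each generator `e_i`, `f_i` only reads and changes the entries `a_{±i}`, `a_{±(i-1)}` of an exponent
vector (`a_{±1}` for `i = 1`), so on `w_j = Σ_{l ≥ j} q^{l-j} v_{ε_{-l}+ε_l}` it sees at most the
summands `l = i - 1` and `l = i`. For `i < j` neither occurs; for `i = j` only `l = i` does and is
computed directly; for `i > j` both occur, and their images are `q v` and `-v` for the same basis
vector `v` (up to a common sign for `f_i`), which cancel against the weights `q^{i-1-j}`, `q^{i-j}`.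
For `i = 1` the `ω₂`-correction drops out because `[0 choose 2]_q = [1 choose 2]_q = 0`.
-/

section QNumbers
variable {𝕜 : Type*} [Field 𝕜] (q : 𝕜)

@[simp] lemma qnum_zero : qnum q 0 = 0 := by simp [qnum]

lemma qnum_one (hq : q ≠ 0) (hq2 : q ^ 2 ≠ 1) : qnum q 1 = 1 := by
  have hsub : q - q⁻¹ ≠ 0 := by
    rw [sub_ne_zero]
    intro h
    apply hq2
    rw [sq]
    nth_rewrite 2 [h]
    exact mul_inv_cancel₀ hq
  simp [qnum, div_self hsub]

@[simp] lemma qbinom2_zero : qbinom2 q 0 = 0 := by simp [qbinom2]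

@[simp] lemma qbinom2_one : qbinom2 q 1 = 0 := by simp [qbinom2]

end QNumbers

def pair (l : ℤ) : ℤ → ℕ := Pi.single (-l) 1 + Pi.single l 1

lemma pair_apply_of_ne {l k : ℤ} (h₁ : k ≠ -l) (h₂ : k ≠ l) : pair l k = 0 := by
  simp [pair, h₁, h₂]

lemma pair_apply_self {l : ℤ} (hl : l ≠ 0) : pair l l = 1 := by
  simp only [pair, Pi.add_apply, Pi.single_apply]
  split_ifs <;> omega

lemma pair_apply_neg_self {l : ℤ} (hl : l ≠ 0) : pair l (-l) = 1 := by
  simp only [pair, Pi.add_apply, Pi.single_apply]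
  split_ifs <;> omega

section Operators
variable {𝕜 : Type*} [Field 𝕜] (n : ℕ) (q : 𝕜)

@[simp] lemma mkOp_vB (f : (ℤ → ℕ) → QV 𝕜) (a : ℤ → ℕ) : mkOp f (vB a) = f a := by
  simp [mkOp, vB]

lemma eop_vB_of_ne_one {i : ℤ} (hi : i ≠ 1) (a : ℤ → ℕ) :
    eop n q i (vB a) =
      (q ^ ((a (i - 1) : ℤ) - (a i : ℤ)) * qnum q (a (1 - i))) •
          vB (a + Pi.single (-i) 1 - Pi.single (1 - i) 1)
      - qnum q (a i) • vB (a + Pi.single (i - 1) 1 - Pi.single i 1) := by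
  rw [eop, if_neg hi, mkOp_vB]

lemma fop_vB_of_ne_one {i : ℤ} (hi : i ≠ 1) (a : ℤ → ℕ) :
    fop n q i (vB a) =
      qnum q (a (-i)) • vB (a - Pi.single (-i) 1 + Pi.single (1 - i) 1)
      - (q ^ ((a (1 - i) : ℤ) - (a (-i) : ℤ)) * qnum q (a (i - 1))) •
          vB (a - Pi.single (i - 1) 1 + Pi.single i 1) := by
  rw [fop, if_neg hi, mkOp_vB]

lemma eop_one_vB (a : ℤ → ℕ) :
    eop n q 1 (vB a) =
      qnum (q ^ 2) (a 1) • vB (a + Pi.single (-1 : ℤ) 1 - Pi.single 1 1)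
      + ((q - q⁻¹) * qbinom2 q (a 1)
          * q ^ (2 - 2 * ∑ l ∈ Finset.Icc (-(n : ℤ)) (-2), (a l : ℤ))) •
          ωop n q 2 (vB (a - Pi.single 1 2)) := by
  rw [eop, if_pos rfl, mkOp_vB]

lemma fop_one_vB (a : ℤ → ℕ) :
    fop n q 1 (vB a) =
      qnum (q ^ 2) (a (-1)) • vB (a - Pi.single (-1 : ℤ) 1 + Pi.single 1 1)
      + ((q - q⁻¹) * qbinom2 q (a (-1))
          * q ^ (2 - 2 * ∑ l ∈ Finset.Icc (-(n : ℤ)) (-2), (a l : ℤ))) •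
          ωop n q 2 (vB (a - Pi.single (-1 : ℤ) 2)) := by
  rw [fop, if_pos rfl, mkOp_vB]

lemma eop_vB_eq_zero {i : ℤ} {a : ℤ → ℕ} (hi : i ≠ 1) (h₁ : a (1 - i) = 0) (h₂ : a i = 0) :
    eop n q i (vB a) = 0 := by
  simp [eop_vB_of_ne_one n q hi, h₁, h₂]

lemma fop_vB_eq_zero {i : ℤ} {a : ℤ → ℕ} (hi : i ≠ 1) (h₁ : a (-i) = 0) (h₂ : a (i - 1) = 0) :
    fop n q i (vB a) = 0 := by
  simp [fop_vB_of_ne_one n q hi, h₁, h₂]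

lemma eop_one_vB_eq_zero {a : ℤ → ℕ} (h : a 1 = 0) : eop n q 1 (vB a) = 0 := by
  simp [eop_one_vB, h]

lemma fop_one_vB_eq_zero {a : ℤ → ℕ} (h : a (-1) = 0) : fop n q 1 (vB a) = 0 := by
  simp [fop_one_vB, h]

end Operators

section PairVectors
variable {𝕜 : Type*} [Field 𝕜] (n : ℕ) (q : 𝕜) {i l : ℤ}

lemma eop_pair_of_ne (hi : 1 ≤ i) (hl : 1 ≤ l) (h₁ : l ≠ i - 1) (h₂ : l ≠ i) :
    eop n q i (vB (pair l)) = 0 := by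
  obtain rfl | hi1 := eq_or_ne i 1
  · exact eop_one_vB_eq_zero n q (pair_apply_of_ne (by omega) (by omega))
  · exact eop_vB_eq_zero n q hi1 (pair_apply_of_ne (by omega) (by omega))
      (pair_apply_of_ne (by omega) (by omega))

lemma fop_pair_of_ne (hi : 1 ≤ i) (hl : 1 ≤ l) (h₁ : l ≠ i - 1) (h₂ : l ≠ i) :
    fop n q i (vB (pair l)) = 0 := by
  obtain rfl | hi1 := eq_or_ne i 1
  · exact fop_one_vB_eq_zero n q (pair_apply_of_ne (by omega) (by omega))
  · exact fop_vB_eq_zero n q hi1 (pair_apply_of_ne (by omega) (by omega))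
      (pair_apply_of_ne (by omega) (by omega))

variable {q} (hq : q ≠ 0) (hq2 : q ^ 2 ≠ 1)
include hq hq2

lemma eop_pair_pred (hi : 2 ≤ i) :
    eop n q i (vB (pair (i - 1))) = q • vB (Pi.single (-i) 1 + Pi.single (i - 1) 1) := by
  have hneg : pair (i - 1) (1 - i) = 1 := by
    rw [show 1 - i = -(i - 1) by ring]; exact pair_apply_neg_self (by omega)
  have hshift : pair (i - 1) + Pi.single (-i) 1 - Pi.single (1 - i) 1
      = Pi.single (-i) 1 + Pi.single (i - 1) 1 := by
    funext k
    simp only [pair, Pi.add_apply, Pi.sub_apply, Pi.single_apply]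
    split_ifs <;> omega
  rw [eop_vB_of_ne_one n q (by omega), pair_apply_self (by omega), hneg,
    pair_apply_of_ne (by omega) (by omega), hshift]
  simp [qnum_one q hq hq2]

lemma eop_pair_self (hi : 2 ≤ i) :
    eop n q i (vB (pair i)) = -vB (Pi.single (-i) 1 + Pi.single (i - 1) 1) := by
  have hshift : pair i + Pi.single (i - 1) 1 - Pi.single i 1
      = Pi.single (-i) 1 + Pi.single (i - 1) 1 := by
    funext k
    simp only [pair, Pi.add_apply, Pi.sub_apply, Pi.single_apply]
    split_ifs <;> omega
  rw [eop_vB_of_ne_one n q (by omega), pair_apply_self (by omega),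
    pair_apply_of_ne (k := 1 - i) (by omega) (by omega), hshift]
  simp [qnum_one q hq hq2]

lemma fop_pair_pred (hi : 2 ≤ i) :
    fop n q i (vB (pair (i - 1))) = -(q • vB (Pi.single (1 - i) 1 + Pi.single i 1)) := by
  have hneg : pair (i - 1) (1 - i) = 1 := by
    rw [show 1 - i = -(i - 1) by ring]; exact pair_apply_neg_self (by omega)
  have hshift : pair (i - 1) - Pi.single (i - 1) 1 + Pi.single i 1
      = Pi.single (1 - i) 1 + Pi.single i 1 := by
    funext k
    simp only [pair, Pi.add_apply, Pi.sub_apply, Pi.single_apply]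
    split_ifs <;> omega
  rw [fop_vB_of_ne_one n q (by omega), pair_apply_self (by omega), hneg,
    pair_apply_of_ne (k := -i) (by omega) (by omega), hshift]
  simp [qnum_one q hq hq2]

lemma fop_pair_self (hi : 2 ≤ i) :
    fop n q i (vB (pair i)) = vB (Pi.single (1 - i) 1 + Pi.single i 1) := by
  have hshift : pair i - Pi.single (-i) 1 + Pi.single (1 - i) 1
      = Pi.single (1 - i) 1 + Pi.single i 1 := by
    funext k
    simp only [pair, Pi.add_apply, Pi.sub_apply, Pi.single_apply]
    split_ifs <;> omega
  rw [fop_vB_of_ne_one n q (by omega), pair_apply_neg_self (by omega),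
    pair_apply_of_ne (k := i - 1) (by omega) (by omega), hshift]
  simp [qnum_one q hq hq2]

omit hq2 in
lemma eop_one_pair_one (hq4 : q ^ 4 ≠ 1) :
    eop n q 1 (vB (pair 1)) = vB (Pi.single (-1 : ℤ) 2) := by
  have hshift : pair 1 + Pi.single (-1 : ℤ) 1 - Pi.single 1 1 = Pi.single (-1 : ℤ) 2 := by
    funext k
    simp only [pair, Pi.add_apply, Pi.sub_apply, Pi.single_apply]
    split_ifs <;> omega
  rw [eop_one_vB, pair_apply_self one_ne_zero, hshift]
  simp [qnum_one (q ^ 2) (pow_ne_zero 2 hq) (by rwa [← pow_mul])]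

omit hq2 in
lemma fop_one_pair_one (hq4 : q ^ 4 ≠ 1) :
    fop n q 1 (vB (pair 1)) = vB (Pi.single (1 : ℤ) 2) := by
  have hshift : pair 1 - Pi.single (-1 : ℤ) 1 + Pi.single 1 1 = Pi.single (1 : ℤ) 2 := by
    funext k
    simp only [pair, Pi.add_apply, Pi.sub_apply, Pi.single_apply]
    split_ifs <;> omega
  rw [fop_one_vB, pair_apply_neg_self one_ne_zero, hshift]
  simp [qnum_one (q ^ 2) (pow_ne_zero 2 hq) (by rwa [← pow_mul])]

end PairVectors

section ActionOnWvec
variable {𝕜 : Type*} [Field 𝕜] (n : ℕ) (q : 𝕜) (T : Module.End 𝕜 (QV 𝕜)) {i j : ℤ}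

lemma map_wvec_of_subset (s : Finset ℤ) (hs : s ⊆ Finset.Icc j n)
    (hT : ∀ l ∈ Finset.Icc j (n : ℤ), l ∉ s → T (vB (pair l)) = 0) :
    T (wvec n q j) = ∑ l ∈ s, q ^ (l - j) • T (vB (pair l)) := by
  simp only [wvec, map_sum, map_smul]
  exact (Finset.sum_subset hs fun l hl hls => by rw [← pair, hT l hl hls, smul_zero]).symm

lemma map_wvec_self (hj : 1 ≤ j) (hjn : j ≤ n)
    (hT : ∀ l, 1 ≤ l → l ≠ j - 1 → l ≠ j → T (vB (pair l)) = 0) :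
    T (wvec n q j) = T (vB (pair j)) := by
  simpa using map_wvec_of_subset n q T {j}
    (Finset.singleton_subset_iff.2 (Finset.mem_Icc.2 ⟨le_rfl, hjn⟩)) fun l hl hlj => by
      rw [Finset.mem_Icc] at hl
      exact hT l (by omega) (by omega) (by simpa using hlj)

variable (hj : 1 ≤ j) (hT : ∀ l, 1 ≤ l → l ≠ i - 1 → l ≠ i → T (vB (pair l)) = 0)
include hj hT

lemma map_wvec_of_lt (hij : i < j) : T (wvec n q j) = 0 := by
  simpa using map_wvec_of_subset n q T ∅ (Finset.empty_subset _) fun l hl _ => by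
    rw [Finset.mem_Icc] at hl
    exact hT l (by omega) (by omega) (by omega)

lemma map_wvec_of_gt (hq : q ≠ 0) (hji : j < i) (hin : i ≤ n)
    (hcancel : T (vB (pair (i - 1))) + q • T (vB (pair i)) = 0) : T (wvec n q j) = 0 := by
  have hsub : ({i - 1, i} : Finset ℤ) ⊆ Finset.Icc j n := by
    intro l hl
    simp only [Finset.mem_insert, Finset.mem_singleton] at hl
    rw [Finset.mem_Icc]
    omega
  rw [map_wvec_of_subset n q T _ hsub fun l hl hls => by
      simp only [Finset.mem_insert, Finset.mem_singleton, not_or] at hls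
      rw [Finset.mem_Icc] at hl
      exact hT l (by omega) hls.1 hls.2,
    Finset.sum_pair (by omega), show i - j = (i - 1 - j) + 1 by ring, zpow_add_one₀ hq,
    mul_smul, ← smul_add, hcancel, smul_zero]

end ActionOnWvec

section Generators
variable {𝕜 : Type*} [Field 𝕜] (n : ℕ) {q : 𝕜} (hq : q ≠ 0) {i j : ℤ}
include hq

lemma eop_wvec_of_ne (hq2 : q ^ 2 ≠ 1) (hi : 1 ≤ i) (hin : i ≤ n) (hj : 1 ≤ j) (hij : i ≠ j) :
    eop n q i (wvec n q j) = 0 := by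
  have hT := fun l (hl : 1 ≤ l) => eop_pair_of_ne n q hi hl
  rcases hij.lt_or_gt with hlt | hgt
  · exact map_wvec_of_lt n q _ hj hT hlt
  · refine map_wvec_of_gt n q _ hj hT hq hgt hin ?_
    rw [eop_pair_pred n hq hq2 (by omega), eop_pair_self n hq hq2 (by omega), smul_neg,
      add_neg_cancel]

lemma fop_wvec_of_ne (hq2 : q ^ 2 ≠ 1) (hi : 1 ≤ i) (hin : i ≤ n) (hj : 1 ≤ j) (hij : i ≠ j) :
    fop n q i (wvec n q j) = 0 := by
  have hT := fun l (hl : 1 ≤ l) => fop_pair_of_ne n q hi hl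
  rcases hij.lt_or_gt with hlt | hgt
  · exact map_wvec_of_lt n q _ hj hT hlt
  · refine map_wvec_of_gt n q _ hj hT hq hgt hin ?_
    rw [fop_pair_pred n hq hq2 (by omega), fop_pair_self n hq hq2 (by omega), neg_add_cancel]

lemma eop_wvec_self (hq2 : q ^ 2 ≠ 1) (hj : 1 < j) (hjn : j ≤ n) :
    eop n q j (wvec n q j) = -vB (Pi.single (-j) 1 + Pi.single (j - 1) 1) := by
  rw [map_wvec_self n q _ hj.le hjn (fun l hl => eop_pair_of_ne n q hj.le hl),
    eop_pair_self n hq hq2 hj]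

lemma fop_wvec_self (hq2 : q ^ 2 ≠ 1) (hj : 1 < j) (hjn : j ≤ n) :
    fop n q j (wvec n q j) = vB (Pi.single (1 - j) 1 + Pi.single j 1) := by
  rw [map_wvec_self n q _ hj.le hjn (fun l hl => fop_pair_of_ne n q hj.le hl),
    fop_pair_self n hq hq2 hj]

lemma eop_one_wvec_one (hq4 : q ^ 4 ≠ 1) (hn : 1 ≤ n) :
    eop n q 1 (wvec n q 1) = vB (Pi.single (-1 : ℤ) 2) := by
  rw [map_wvec_self n q _ le_rfl (by exact_mod_cast hn)
    (fun l hl => eop_pair_of_ne n q le_rfl hl), eop_one_pair_one n hq hq4]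

lemma fop_one_wvec_one (hq4 : q ^ 4 ≠ 1) (hn : 1 ≤ n) :
    fop n q 1 (wvec n q 1) = vB (Pi.single (1 : ℤ) 2) := by
  rw [map_wvec_self n q _ le_rfl (by exact_mod_cast hn)
    (fun l hl => fop_pair_of_ne n q le_rfl hl), fop_one_pair_one n hq hq4]

end Generators

theorem stmt12_general {𝕜 : Type*} [Field 𝕜] (n : ℕ) (hn : 2 ≤ n)
    (q : 𝕜) (hq : q ≠ 0) (hroot : ∀ r : ℕ, r ≠ 0 → q ^ r ≠ 1) :
    (∀ i j : ℤ, 1 ≤ i → i ≤ n → 1 ≤ j → j ≤ n → i ≠ j →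
      eop n q i (wvec n q j) = 0 ∧ fop n q i (wvec n q j) = 0) ∧
    (∀ j : ℤ, 1 < j → j ≤ n →
      eop n q j (wvec n q j) = -vB (Pi.single (-j) 1 + Pi.single (j - 1) 1) ∧
      fop n q j (wvec n q j) = vB (Pi.single (1 - j) 1 + Pi.single j 1)) ∧
    eop n q 1 (wvec n q 1) = vB (Pi.single (-1 : ℤ) 2) ∧
    fop n q 1 (wvec n q 1) = vB (Pi.single (1 : ℤ) 2) := by
  have hq2 : q ^ 2 ≠ 1 := hroot 2 two_ne_zero
  have hq4 : q ^ 4 ≠ 1 := hroot 4 four_ne_zero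
  have hn1 : 1 ≤ n := by omega
  exact ⟨fun i j hi hin hj _ hij =>
      ⟨eop_wvec_of_ne n hq hq2 hi hin hj hij, fop_wvec_of_ne n hq hq2 hi hin hj hij⟩,
    fun j hj hjn => ⟨eop_wvec_self n hq hq2 hj hjn, fop_wvec_self n hq hq2 hj hjn⟩,
    eop_one_wvec_one n hq hq4 hn1, fop_one_wvec_one n hq hq4 hn1⟩

/-- Action of the `e_i`, `f_i` on the vectors `w_j`:
`e_i w_j = f_i w_j = 0` for `i ≠ j`; `e_j w_j = -v_{ε_{-j}+ε_{j-1}}` and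
`f_j w_j = v_{ε_{1-j}+ε_j}` for `j > 1`; `e_1 w_1 = v_{2ε_{-1}}`, `f_1 w_1 = v_{2ε_1}`. -/
theorem stmt12 {𝕜 : Type*} [Field 𝕜] [CharZero 𝕜] (n : ℕ) (hn : 2 ≤ n)
    (q : 𝕜) (hq : q ≠ 0) (hroot : ∀ r : ℕ, r ≠ 0 → q ^ r ≠ 1) :
    (∀ i j : ℤ, 1 ≤ i → i ≤ n → 1 ≤ j → j ≤ n → i ≠ j →
      eop n q i (wvec n q j) = 0 ∧ fop n q i (wvec n q j) = 0) ∧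
    (∀ j : ℤ, 1 < j → j ≤ n →
      eop n q j (wvec n q j) = -vB (Pi.single (-j) 1 + Pi.single (j - 1) 1) ∧
      fop n q j (wvec n q j) = vB (Pi.single (1 - j) 1 + Pi.single j 1)) ∧
    eop n q 1 (wvec n q 1) = vB (Pi.single (-1 : ℤ) 2) ∧
    fop n q 1 (wvec n q 1) = vB (Pi.single (1 : ℤ) 2) :=
  stmt12_general n hn q hq hroot
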